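/- Two-sample pairwise exchangeability of SENS samples (Theorem 2). Under the two-sample model X_{ij} = μ_{xi} + ε_{xij} (j ∈ [n_{xi}]), Y_{ij} = μ_{yi} + ε_{yij} (j ∈ [n_{yi}]), i ∈ [m], with n_{xi} ≥ 4, n_{yi} ≥ 4 and null set H₀ = {i : μ_{xi} = μ_{yi}}, suppose that for every i ∈ H₀, conditionally on all observations from the other units, the x-errors (ε_{xij})_j and the y-errors (ε_{yij})_j of unit i are independent of each other, each is almost surely an i.i.d. sample from a probability measure on ℝ admitting a density symmetric about zero. Partition [n_{xi}] into N_{xi1}, N_{xi2} and [n_{yi}] into N_{yi1}, N_{yi2}; let X̄_{ik}, Ȳ_{ik} be the corresponding half-sample means and S²_{xik}, S²_{yik} the half-sample variances; set S²_{xi} = ((n_{xi1}−1)S²_{xi1} + (n_{xi2}−1)S²_{xi2})/(n_{xi}−2) and similarly S²_{yi}; define V_i = (X̄_{i1}−Ȳ_{i1}) + (X̄_{i2}−Ȳ_{i2}), V_i⁰ = (X̄_{i1}−Ȳ_{i1}) − (X̄_{i2}−Ȳ_{i2}), S_i = √( (n_{xi}/(n_{xi1} n_{xi2})) S²_{xi}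 + (n_{yi}/(n_{yi1} n_{yi2})) S²_{yi} ), and T_i = h_i(V_i/S_i), T_i⁰ = h_i(V_i⁰/S_i) for an arbitrary fixed Borel measurable h_i : ℝ → ℝ. Then for every i ∈ H₀ the vectors T = (T_1,…,T_m) and T⁰ = (T_1⁰,…,T_m⁰) are pairwise exchangeable at index i: the joint law of (T, T⁰) is invariant under swapping T_i and T_i⁰. -/

import Mathlib

open MeasureTheory ProbabilityTheory
open scoped Classical

/-- Sample mean of the values `x j`, `j ∈ s`. -/
noncomputable def sampleMean {ι : Type*} (s : Finset ι) (x : ι → ℝ) : ℝ :=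
  (∑ j ∈ s, x j) / s.card

/-- Sample variance of the values `x j`, `j ∈ s`. -/
noncomputable def sampleVar {ι : Type*} (s : Finset ι) (x : ι → ℝ) : ℝ :=
  (∑ j ∈ s, (x j - sampleMean s x) ^ 2) / (s.card - 1)

/-- Swap the coordinates indexed by `J` between the two vectors of a pair. -/
def swapSet {m : ℕ} (J : Finset (Fin m)) (p : (Fin m → ℝ) × (Fin m → ℝ)) :
    (Fin m → ℝ) × (Fin m → ℝ) :=
  (fun j => if j ∈ J then p.2 j else p.1 j, fun j => if j ∈ J then p.1 j else p.2 j)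

/-!
Under the null, the data of unit `i` are `c + ε` with a common centre `c = μx i = μy i`.
Negating the errors of the second half-samples of unit `i` (in both samples) negates
`X̄ᵢ₂ - Ȳᵢ₂`, keeps `X̄ᵢ₁ - Ȳᵢ₁` and every half-sample variance, and touches no other unit;
so it swaps `Vᵢ` and `Vᵢ⁰`, fixes `Sᵢ`, and thereby swaps `Tᵢ` and `Tᵢ⁰`. Conditionally on
the other units, these errors are i.i.d. from even densities, so the joint law of
(other units, errors of unit `i`) is invariant under the negation, and hence the law of
`(T, T⁰)` is invariant under the swap.
-/

section SampleStatistics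

variable {ι : Type*} {s t : Finset ι}

lemma sampleMean_congr {x y : ι → ℝ} (h : ∀ j ∈ s, x j = y j) :
    sampleMean s x = sampleMean s y := by
  rw [sampleMean, sampleMean, Finset.sum_congr rfl h]

lemma sampleVar_congr {x y : ι → ℝ} (h : ∀ j ∈ s, x j = y j) :
    sampleVar s x = sampleVar s y := by
  rw [sampleVar, sampleVar, sampleMean_congr h, Finset.sum_congr rfl fun j hj => by rw [h j hj]]

lemma sampleMean_const_add (hs : s.Nonempty) (c : ℝ) (x : ι → ℝ) :
    sampleMean s (fun j => c + x j) = c + sampleMean s x := by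
  have : (s.card : ℝ) ≠ 0 := by exact_mod_cast hs.card_ne_zero
  rw [sampleMean, sampleMean, Finset.sum_add_distrib, Finset.sum_const, nsmul_eq_mul]
  field_simp

lemma sampleMean_const_sub (hs : s.Nonempty) (c : ℝ) (x : ι → ℝ) :
    sampleMean s (fun j => c - x j) = c - sampleMean s x := by
  have : (s.card : ℝ) ≠ 0 := by exact_mod_cast hs.card_ne_zero
  rw [sampleMean, sampleMean, Finset.sum_sub_distrib, Finset.sum_const, nsmul_eq_mul]
  field_simp

lemma sampleVar_const_add (hs : s.Nonempty) (c : ℝ) (x : ι → ℝ) :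
    sampleVar s (fun j => c + x j) = sampleVar s x := by
  simp only [sampleVar, sampleMean_const_add hs, add_sub_add_left_eq_sub]

lemma sampleVar_const_sub (hs : s.Nonempty) (c : ℝ) (x : ι → ℝ) :
    sampleVar s (fun j => c - x j) = sampleVar s x := by
  simp only [sampleVar, sampleMean_const_sub hs, sub_sub_sub_cancel_left, sub_sq_comm]

@[fun_prop]
lemma measurable_sampleMean (s : Finset ι) : Measurable fun x : ι → ℝ => sampleMean s x := by
  unfold sampleMean; fun_prop

@[fun_prop]
lemma measurable_sampleVar (s : Finset ι) : Measurable fun x : ι → ℝ => sampleVar s x := by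
  unfold sampleVar; fun_prop

variable {x y : ι → ℝ}

lemma sampleMean_piecewise_of_disjoint [∀ j, Decidable (j ∈ t)] (hst : Disjoint s t) :
    sampleMean s (t.piecewise y x) = sampleMean s x :=
  sampleMean_congr fun _ hj => t.piecewise_eq_of_notMem _ _ (Finset.disjoint_left.1 hst hj)

lemma sampleVar_piecewise_of_disjoint [∀ j, Decidable (j ∈ t)] (hst : Disjoint s t) :
    sampleVar s (t.piecewise y x) = sampleVar s x :=
  sampleVar_congr fun _ hj => t.piecewise_eq_of_notMem _ _ (Finset.disjoint_left.1 hst hj)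

lemma sampleMean_piecewise_self [∀ j, Decidable (j ∈ s)] :
    sampleMean s (s.piecewise y x) = sampleMean s y :=
  sampleMean_congr fun _ hj => s.piecewise_eq_of_mem _ _ hj

lemma sampleVar_piecewise_self [∀ j, Decidable (j ∈ s)] :
    sampleVar s (s.piecewise y x) = sampleVar s y :=
  sampleVar_congr fun _ hj => s.piecewise_eq_of_mem _ _ hj

end SampleStatistics

lemma map_neg_withDensity_of_even {G : Type*} [MeasurableSpace G] [InvolutiveNeg G]
    [MeasurableNeg G] (μ : Measure G) [μ.IsNegInvariant] {f : G → ENNReal} (hf : ∀ x, f (-x) = f x) :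
    (μ.withDensity f).map Neg.neg = μ.withDensity f := by
  ext B hB
  rw [Measure.map_apply measurable_neg hB, withDensity_apply _ (measurable_neg hB),
    withDensity_apply _ hB, ← (Measure.measurePreserving_neg μ).setLIntegral_comp_preimage_emb
      (MeasurableEquiv.neg G).measurableEmbedding f B]
  simp only [hf]

lemma measurable_piecewise_neg {ι G : Type*} [MeasurableSpace G] [Neg G] [MeasurableNeg G]
    (s : Finset ι) [DecidablePred (· ∈ s)] :
    Measurable fun x : ι → G => s.piecewise (-x) x :=
  measurable_pi_lambda _ fun j => by
    by_cases hj : j ∈ s <;>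
      simp only [hj, Finset.piecewise_eq_of_mem, Finset.piecewise_eq_of_notMem, Pi.neg_apply,
        not_false_eq_true] <;> fun_prop

lemma map_piecewise_neg_pi {ι G : Type*} [Fintype ι] [MeasurableSpace G] [InvolutiveNeg G]
    [MeasurableNeg G] (s : Finset ι) [DecidablePred (· ∈ s)] (ν : Measure G) [SigmaFinite ν]
    (hν : ν.map Neg.neg = ν) :
    (Measure.pi fun _ : ι => ν).map (fun x => s.piecewise (-x) x) = Measure.pi fun _ => ν := by
  let f : ι → G → G := fun j => if j ∈ s then Neg.neg else id
  have hf : ∀ j, ν.map (f j) = ν := fun j => by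
    by_cases hj : j ∈ s <;> simp [f, hj, hν]
  have : ∀ j, SigmaFinite (ν.map (f j)) := fun j => by rw [hf j]; infer_instance
  have hflip : (fun x : ι → G => s.piecewise (-x) x) = fun x j => f j (x j) := by
    ext x j; by_cases hj : j ∈ s <;> simp [f, hj]
  rw [hflip, Measure.pi_map_pi fun j => ?_]
  · simp only [hf]
  · by_cases hj : j ∈ s <;> simp only [f, hj, if_true, if_false] <;> fun_prop

lemma map_prodMap_piecewise_neg_pi_withDensity {ι κ G : Type*} [Fintype ι] [Fintype κ]
    [MeasurableSpace G] [InvolutiveNeg G] [MeasurableNeg G] (μ : Measure G) [μ.IsNegInvariant]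
    (s : Finset ι) (t : Finset κ) [DecidablePred (· ∈ s)] [DecidablePred (· ∈ t)]
    {f g : G → ENNReal} (hf : ∫⁻ x, f x ∂μ ≠ ⊤) (hg : ∫⁻ x, g x ∂μ ≠ ⊤)
    (hf_even : ∀ x, f (-x) = f x) (hg_even : ∀ x, g (-x) = g x) :
    ((Measure.pi fun _ : ι => μ.withDensity f).prod (Measure.pi fun _ : κ => μ.withDensity g)).map
        (Prod.map (fun x => s.piecewise (-x) x) (fun y => t.piecewise (-y) y))
      = (Measure.pi fun _ : ι => μ.withDensity f).prod
          (Measure.pi fun _ : κ => μ.withDensity g) := by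
  have : IsFiniteMeasure (μ.withDensity f) := isFiniteMeasure_withDensity hf
  have : IsFiniteMeasure (μ.withDensity g) := isFiniteMeasure_withDensity hg
  rw [← Measure.map_prod_map _ _ (measurable_piecewise_neg s) (measurable_piecewise_neg t),
    map_piecewise_neg_pi s _ (map_neg_withDensity_of_even μ hf_even),
    map_piecewise_neg_pi t _ (map_neg_withDensity_of_even μ hg_even)]

lemma map_prodMap_id_eq_self_of_disintegration {α β : Type*} [MeasurableSpace α]
    [MeasurableSpace β] {μ : Measure (α × β)} [IsFiniteMeasure μ] {ν : Measure α}
    {κ : α → Measure β}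
    (hμ : ∀ A B, MeasurableSet A → MeasurableSet B → μ (A ×ˢ B) = ∫⁻ a in A, κ a B ∂ν)
    {τ : β → β} (hτ : Measurable τ) (hκ : ∀ᵐ a ∂ν, (κ a).map τ = κ a) :
    μ.map (Prod.map id τ) = μ := by
  have hmeas : Measurable (Prod.map (id : α → α) τ) := measurable_id.prodMap hτ
  refine ext_of_generate_finite _ generateFrom_prod.symm isPiSystem_prod ?_ ?_
  · rintro _ ⟨A, hA, B, hB, rfl⟩
    rw [Measure.map_apply hmeas (hA.prod hB), Set.preimage_prod_map_prod, Set.preimage_id,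
      hμ A _ hA (hτ hB), hμ A B hA hB]
    refine setLIntegral_congr_fun_ae hA ?_
    filter_upwards [hκ] with a ha _
    rw [← Measure.map_apply hτ hB, ha]
  · rw [Measure.map_apply hmeas MeasurableSet.univ, Set.preimage_univ]

lemma nonempty_of_union_eq_univ_of_card_eq_half {n : ℕ} {N₁ N₂ : Finset (Fin n)}
    (hu : N₁ ∪ N₂ = Finset.univ) (hc : N₁.card = (n + 1) / 2) (hn : 2 ≤ n) : N₂.Nonempty := by
  rw [Finset.nonempty_iff_ne_empty]
  rintro rfl
  rw [Finset.union_empty] at hu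
  rw [hu, Finset.card_univ, Fintype.card_fin] at hc
  omega

section SENS

variable {a b : ℕ} (N₁ N₂ : Finset (Fin a)) (M₁ M₂ : Finset (Fin b))

noncomputable def sensV (x : Fin a → ℝ) (y : Fin b → ℝ) : ℝ :=
  (sampleMean N₁ x - sampleMean M₁ y) + (sampleMean N₂ x - sampleMean M₂ y)

noncomputable def sensV0 (x : Fin a → ℝ) (y : Fin b → ℝ) : ℝ :=
  (sampleMean N₁ x - sampleMean M₁ y) - (sampleMean N₂ x - sampleMean M₂ y)

noncomputable def sensS (x : Fin a → ℝ) (y : Fin b → ℝ) : ℝ :=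
  Real.sqrt
    (((a : ℝ) / ((N₁.card : ℝ) * (N₂.card : ℝ))) *
        ((((N₁.card : ℝ) - 1) * sampleVar N₁ x + ((N₂.card : ℝ) - 1) * sampleVar N₂ x) /
          ((a : ℝ) - 2)) +
      ((b : ℝ) / ((M₁.card : ℝ) * (M₂.card : ℝ))) *
        ((((M₁.card : ℝ) - 1) * sampleVar M₁ y + ((M₂.card : ℝ) - 1) * sampleVar M₂ y) /
          ((b : ℝ) - 2)))

noncomputable def sensPair (g : ℝ → ℝ) (x : Fin a → ℝ) (y : Fin b → ℝ) : ℝ × ℝ :=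
  (g (sensV N₁ N₂ M₁ M₂ x y / sensS N₁ N₂ M₁ M₂ x y),
    g (sensV0 N₁ N₂ M₁ M₂ x y / sensS N₁ N₂ M₁ M₂ x y))

lemma measurable_sensPair {α : Type*} [MeasurableSpace α] {g : ℝ → ℝ} {x : α → Fin a → ℝ}
    {y : α → Fin b → ℝ} (hg : Measurable g) (hx : Measurable x) (hy : Measurable y) :
    Measurable fun p => sensPair N₁ N₂ M₁ M₂ g (x p) (y p) := by
  unfold sensPair sensV sensV0 sensS
  fun_prop

variable {N₁ N₂ M₁ M₂}

lemma sensPair_flip (hN : Disjoint N₁ N₂) (hM : Disjoint M₁ M₂) (hN₂ : N₂.Nonempty)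
    (hM₂ : M₂.Nonempty) (g : ℝ → ℝ) (c : ℝ) (e : Fin a → ℝ) (f : Fin b → ℝ) :
    sensPair N₁ N₂ M₁ M₂ g (fun l => c + N₂.piecewise (-e) e l)
        (fun l => c + M₂.piecewise (-f) f l)
      = (sensPair N₁ N₂ M₁ M₂ g (fun l => c + e l) (fun l => c + f l)).swap := by
  have reflect : ∀ {n} (s : Finset (Fin n)) (e : Fin n → ℝ),
      (fun l => c + s.piecewise (-e) e l) = s.piecewise (fun l => c - e l) (fun l => c + e l) :=
    fun s e => funext fun l => by by_cases hl : l ∈ s <;> simp [hl, sub_eq_add_neg]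
  rw [reflect, reflect]
  simp only [sensPair, sensV, sensV0, sensS, sampleMean_piecewise_of_disjoint hN,
    sampleMean_piecewise_of_disjoint hM, sampleVar_piecewise_of_disjoint hN,
    sampleVar_piecewise_of_disjoint hM, sampleMean_piecewise_self, sampleVar_piecewise_self,
    sampleMean_const_add hN₂, sampleMean_const_add hM₂, sampleMean_const_sub hN₂,
    sampleMean_const_sub hM₂, sampleVar_const_add hN₂, sampleVar_const_add hM₂,
    sampleVar_const_sub hN₂, sampleVar_const_sub hM₂, Prod.swap_prod_mk]
  ring_nf

end SENS

lemma measurable_piSplitAt_symm {α : Type*} [DecidableEq α] (i : α) (β : α → Type*)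
    [∀ j, MeasurableSpace (β j)] : Measurable (Equiv.piSplitAt i β).symm := by
  refine measurable_pi_lambda _ fun j => ?_
  by_cases hj : j = i
  · subst hj
    simpa using measurable_fst
  · simp only [Equiv.piSplitAt_symm_apply, hj, dite_false]
    fun_prop

lemma measurable_swapSet {m : ℕ} (J : Finset (Fin m)) : Measurable (swapSet J) :=
  Measurable.prodMk (measurable_pi_lambda _ fun j => by split_ifs <;> fun_prop)
    (measurable_pi_lambda _ fun j => by split_ifs <;> fun_prop)

section SENSVector

variable {m : ℕ} {nx ny : Fin m → ℕ}
  (Nx₁ Nx₂ : (i : Fin m) → Finset (Fin (nx i))) (Ny₁ Ny₂ : (i : Fin m) → Finset (Fin (ny i)))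
  (h : Fin m → ℝ → ℝ)

noncomputable def sensStat (x : (j : Fin m) → Fin (nx j) → ℝ) (y : (j : Fin m) → Fin (ny j) → ℝ) :
    (Fin m → ℝ) × (Fin m → ℝ) :=
  (fun j => (sensPair (Nx₁ j) (Nx₂ j) (Ny₁ j) (Ny₂ j) (h j) (x j) (y j)).1,
    fun j => (sensPair (Nx₁ j) (Nx₂ j) (Ny₁ j) (Ny₂ j) (h j) (x j) (y j)).2)

lemma measurable_sensStat {α : Type*} [MeasurableSpace α] (hh : ∀ j, Measurable (h j))
    {x : α → (j : Fin m) → Fin (nx j) → ℝ} {y : α → (j : Fin m) → Fin (ny j) → ℝ}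
    (hx : Measurable x) (hy : Measurable y) :
    Measurable fun p => sensStat Nx₁ Nx₂ Ny₁ Ny₂ h (x p) (y p) := by
  have hpair : ∀ j, Measurable fun p =>
      sensPair (Nx₁ j) (Nx₂ j) (Ny₁ j) (Ny₂ j) (h j) (x p j) (y p j) := fun j =>
    measurable_sensPair _ _ _ _ (hh j) (by fun_prop) (by fun_prop)
  exact (measurable_pi_lambda _ fun j => (hpair j).fst).prodMk
    (measurable_pi_lambda _ fun j => (hpair j).snd)

/-- The SENS vectors when the other units have data `p.1` and unit `i` has data `c + p.2`. -/
noncomputable def sensStatSplitAt (i : Fin m) (c : ℝ)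
    (p : (((k : {k : Fin m // k ≠ i}) → Fin (nx k) → ℝ) ×
      ((k : {k : Fin m // k ≠ i}) → Fin (ny k) → ℝ)) × ((Fin (nx i) → ℝ) × (Fin (ny i) → ℝ))) :
    (Fin m → ℝ) × (Fin m → ℝ) :=
  sensStat Nx₁ Nx₂ Ny₁ Ny₂ h ((Equiv.piSplitAt i _).symm (fun l => c + p.2.1 l, p.1.1))
    ((Equiv.piSplitAt i _).symm (fun l => c + p.2.2 l, p.1.2))

lemma measurable_sensStatSplitAt (hh : ∀ j, Measurable (h j)) (i : Fin m) (c : ℝ) :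
    Measurable (sensStatSplitAt Nx₁ Nx₂ Ny₁ Ny₂ h i c) :=
  measurable_sensStat Nx₁ Nx₂ Ny₁ Ny₂ h hh ((measurable_piSplitAt_symm i _).comp (by fun_prop))
    ((measurable_piSplitAt_symm i _).comp (by fun_prop))

variable {Nx₁ Nx₂ Ny₁ Ny₂}

lemma sensStatSplitAt_flip {i : Fin m} (hN : Disjoint (Nx₁ i) (Nx₂ i))
    (hM : Disjoint (Ny₁ i) (Ny₂ i)) (hN₂ : (Nx₂ i).Nonempty) (hM₂ : (Ny₂ i).Nonempty) (c : ℝ) :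
    sensStatSplitAt Nx₁ Nx₂ Ny₁ Ny₂ h i c ∘ Prod.map id
        (Prod.map (fun e => (Nx₂ i).piecewise (-e) e) (fun f => (Ny₂ i).piecewise (-f) f))
      = swapSet {i} ∘ sensStatSplitAt Nx₁ Nx₂ Ny₁ Ny₂ h i c := by
  ext p j <;> by_cases hj : j = i <;> (try subst hj) <;>
    simp [sensStatSplitAt, sensStat, swapSet, sensPair_flip hN hM hN₂ hM₂, *]

end SENSVector

/-- **Two-sample pairwise exchangeability of SENS samples (Theorem 2).**
Under the two-sample model `X i j = μx i + εx i j`, `Y i j = μy i + εy i j` with at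
least four observations per unit per sample, if for every null unit `i`
(i.e. `μx i = μy i`), conditionally on all observations from the other units, the
x-errors and y-errors of unit `i` are independent of each other and each is an i.i.d.
sample from a probability measure admitting a density symmetric about zero, then the
SENS vectors `T`, `T⁰` are pairwise exchangeable at every null index `i`. -/
theorem sens_two_sample_pairwise_exchangeability
    {Ω : Type*} [MeasurableSpace Ω] (P : Measure Ω) [IsProbabilityMeasure P]
    (m : ℕ) (nx ny : Fin m → ℕ) (hnx : ∀ i, 4 ≤ nx i) (hny : ∀ i, 4 ≤ ny i)
    (μx μy : Fin m → ℝ)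
    (εx : (i : Fin m) → Fin (nx i) → Ω → ℝ)
    (εy : (i : Fin m) → Fin (ny i) → Ω → ℝ)
    (hεxmeas : ∀ i j, Measurable (εx i j)) (hεymeas : ∀ i j, Measurable (εy i j))
    (X : (i : Fin m) → Fin (nx i) → Ω → ℝ)
    (Y : (i : Fin m) → Fin (ny i) → Ω → ℝ)
    (hXdef : ∀ i j ω, X i j ω = μx i + εx i j ω)
    (hYdef : ∀ i j ω, Y i j ω = μy i + εy i j ω)
    -- For every null unit `i`, conditionally on the observations of all other units,
    -- the pair of error vectors of unit `i` is distributed as a product of two i.i.d.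
    -- products of measures admitting densities symmetric about zero (so, in particular,
    -- the x-errors and y-errors of unit `i` are conditionally independent).
    (hcond : ∀ i : Fin m, μx i = μy i →
      ∃ (κ : Kernel
          (((k : {k : Fin m // k ≠ i}) → Fin (nx k.1) → ℝ) ×
            ((k : {k : Fin m // k ≠ i}) → Fin (ny k.1) → ℝ))
          ((Fin (nx i) → ℝ) × (Fin (ny i) → ℝ)))
        (fx fy : (((k : {k : Fin m // k ≠ i}) → Fin (nx k.1) → ℝ) ×
            ((k : {k : Fin m // k ≠ i}) → Fin (ny k.1) → ℝ)) → ℝ → ENNReal),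
        (∀ (A : Set (((k : {k : Fin m // k ≠ i}) → Fin (nx k.1) → ℝ) ×
              ((k : {k : Fin m // k ≠ i}) → Fin (ny k.1) → ℝ)))
            (B : Set ((Fin (nx i) → ℝ) × (Fin (ny i) → ℝ))),
            MeasurableSet A → MeasurableSet B →
          P {ω | ((fun k : {k : Fin m // k ≠ i} => fun j => X k.1 j ω),
                  (fun k : {k : Fin m // k ≠ i} => fun j => Y k.1 j ω)) ∈ A ∧
              ((fun j => εx i j ω), (fun j => εy i j ω)) ∈ B}
            = ∫⁻ a in A, κ a B
                ∂(Measure.map (fun ω =>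
                    ((fun k : {k : Fin m // k ≠ i} => fun j => X k.1 j ω),
                     (fun k : {k : Fin m // k ≠ i} => fun j => Y k.1 j ω))) P)) ∧
        (∀ᵐ a ∂(Measure.map (fun ω =>
              ((fun k : {k : Fin m // k ≠ i} => fun j => X k.1 j ω),
               (fun k : {k : Fin m // k ≠ i} => fun j => Y k.1 j ω))) P),
          Measurable (fx a) ∧ Measurable (fy a) ∧
          (∫⁻ x, fx a x = 1) ∧ (∫⁻ x, fy a x = 1) ∧
          (∀ x : ℝ, fx a (-x) = fx a x) ∧ (∀ x : ℝ, fy a (-x) = fy a x) ∧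
          κ a = (Measure.pi fun _ : Fin (nx i) =>
                    (volume : Measure ℝ).withDensity (fx a)).prod
                (Measure.pi fun _ : Fin (ny i) =>
                    (volume : Measure ℝ).withDensity (fy a))))
    -- the within-unit partitions of each of the two samples
    (Nx₁ Nx₂ : (i : Fin m) → Finset (Fin (nx i)))
    (Ny₁ Ny₂ : (i : Fin m) → Finset (Fin (ny i)))
    (hxdisj : ∀ i, Disjoint (Nx₁ i) (Nx₂ i)) (hydisj : ∀ i, Disjoint (Ny₁ i) (Ny₂ i))
    (hxunion : ∀ i, Nx₁ i ∪ Nx₂ i = Finset.univ)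
    (hyunion : ∀ i, Ny₁ i ∪ Ny₂ i = Finset.univ)
    (hxcard : ∀ i, (Nx₁ i).card = (nx i + 1) / 2)
    (hycard : ∀ i, (Ny₁ i).card = (ny i + 1) / 2)
    -- arbitrary fixed Borel measurable transformation for each unit
    (h : Fin m → ℝ → ℝ) (hh : ∀ i, Measurable (h i))
    (V V0 S T T0 : Fin m → Ω → ℝ)
    (hV : ∀ i ω, V i ω
      = (sampleMean (Nx₁ i) (fun j => X i j ω) - sampleMean (Ny₁ i) (fun j => Y i j ω)) +
        (sampleMean (Nx₂ i) (fun j => X i j ω) - sampleMean (Ny₂ i) (fun j => Y i j ω)))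
    (hV0 : ∀ i ω, V0 i ω
      = (sampleMean (Nx₁ i) (fun j => X i j ω) - sampleMean (Ny₁ i) (fun j => Y i j ω)) -
        (sampleMean (Nx₂ i) (fun j => X i j ω) - sampleMean (Ny₂ i) (fun j => Y i j ω)))
    (hS : ∀ i ω, S i ω = Real.sqrt
      (((nx i : ℝ) / (((Nx₁ i).card : ℝ) * ((Nx₂ i).card : ℝ))) *
          (((((Nx₁ i).card : ℝ) - 1) * sampleVar (Nx₁ i) (fun j => X i j ω) +
            (((Nx₂ i).card : ℝ) - 1) * sampleVar (Nx₂ i) (fun j => X i j ω)) /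
              ((nx i : ℝ) - 2)) +
        ((ny i : ℝ) / (((Ny₁ i).card : ℝ) * ((Ny₂ i).card : ℝ))) *
          (((((Ny₁ i).card : ℝ) - 1) * sampleVar (Ny₁ i) (fun j => Y i j ω) +
            (((Ny₂ i).card : ℝ) - 1) * sampleVar (Ny₂ i) (fun j => Y i j ω)) /
              ((ny i : ℝ) - 2))))
    (hT : ∀ i ω, T i ω = h i (V i ω / S i ω))
    (hT0 : ∀ i ω, T0 i ω = h i (V0 i ω / S i ω))
    (i : Fin m) (hi : μx i = μy i) :
    Measure.map (swapSet {i})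
        (Measure.map (fun ω => (fun j => T j ω, fun j => T0 j ω)) P)
      = Measure.map (fun ω => (fun j => T j ω, fun j => T0 j ω)) P := by
  obtain ⟨κ, fx, fy, hdisint, hdens⟩ := hcond i hi
  have hXm : ∀ k l, Measurable (X k l) := fun k l => by
    rw [funext (hXdef k l)]; exact measurable_const.add (hεxmeas k l)
  have hYm : ∀ k l, Measurable (Y k l) := fun k l => by
    rw [funext (hYdef k l)]; exact measurable_const.add (hεymeas k l)
  let Z := fun ω => ((fun k : {k : Fin m // k ≠ i} => fun l => X k.1 l ω,
      fun k : {k : Fin m // k ≠ i} => fun l => Y k.1 l ω), (fun l => εx i l ω, fun l => εy i l ω))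
  let τ := Prod.map (fun e : Fin (nx i) → ℝ => (Nx₂ i).piecewise (-e) e)
    (fun f : Fin (ny i) → ℝ => (Ny₂ i).piecewise (-f) f)
  let G := sensStatSplitAt Nx₁ Nx₂ Ny₁ Ny₂ h i (μx i)
  have hZ : Measurable Z := by fun_prop
  have hτ : Measurable τ := (measurable_piecewise_neg _).prodMap (measurable_piecewise_neg _)
  have hG : Measurable G := measurable_sensStatSplitAt Nx₁ Nx₂ Ny₁ Ny₂ h hh i (μx i)
  have hTG : (fun ω => (fun j => T j ω, fun j => T0 j ω)) = G ∘ Z := by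
    funext ω
    have hXω : (Equiv.piSplitAt i _).symm (fun l => μx i + (Z ω).2.1 l, (Z ω).1.1)
        = fun j l => X j l ω :=
      (Equiv.symm_apply_eq _).2 (Prod.ext (funext fun l => (hXdef i l ω).symm) rfl)
    have hYω : (Equiv.piSplitAt i _).symm (fun l => μx i + (Z ω).2.2 l, (Z ω).1.2)
        = fun j l => Y j l ω :=
      (Equiv.symm_apply_eq _).2 (Prod.ext (funext fun l => (hi ▸ hYdef i l ω).symm) rfl)
    simp only [Function.comp_apply, G, sensStatSplitAt, hXω, hYω]
    exact Prod.ext (funext fun j => (hT j ω).trans (by rw [hV, hS]; rfl))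
      (funext fun j => (hT0 j ω).trans (by rw [hV0, hS]; rfl))
  have hGτ : G ∘ Prod.map id τ = swapSet {i} ∘ G := sensStatSplitAt_flip h (hxdisj i) (hydisj i)
    (nonempty_of_union_eq_univ_of_card_eq_half (hxunion i) (hxcard i) (by linarith [hnx i]))
    (nonempty_of_union_eq_univ_of_card_eq_half (hyunion i) (hycard i) (by linarith [hny i])) _
  have hZτ : (P.map Z).map (Prod.map id τ) = P.map Z := by
    refine map_prodMap_id_eq_self_of_disintegration
      (fun A B hA hB => (Measure.map_apply hZ (hA.prod hB)).trans (hdisint A B hA hB)) hτ ?_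
    filter_upwards [hdens] with a ⟨_, _, h1x, h1y, hsx, hsy, hκ⟩
    rw [hκ]
    exact map_prodMap_piecewise_neg_pi_withDensity _ _ _ (by simp [h1x]) (by simp [h1y]) hsx hsy
  rw [hTG, ← Measure.map_map hG hZ, Measure.map_map (measurable_swapSet _) hG, ← hGτ,
    ← Measure.map_map hG (measurable_id.prodMap hτ), hZτ]
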